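/- arXiv:1801.06486 — 6 statements merged into one kernel-verified Lean document; each statement's English description precedes it below -/
import Mathlib

section
/- For integers i ≥ 1 and real numbers m' > m > 0, the sum over n from i+1 to infinity of Γ(n+m-1)/(Γ(i)·Γ(n-i)) · B(n-i, m'+i) equals Γ(m+i)/(Γ(i)·(m'-m)), where B denotes the Beta function. -/
/-!
Writing `a = m + i` and `b = m' + i`, the Beta function cancels `Γ(n - i)` and the `k`-th term
becomes `Γ(b)/Γ(i) · Γ(k+a)/Γ(k+b+1)`. Since
`Γ(k+a)/Γ(k+b) - Γ(k+1+a)/Γ(k+1+b) = (b-a) Γ(k+a)/Γ(k+b+1)`, the series telescopes to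
`Γ(a)/((b-a) Γ(b))`; the tail vanishes because `Γ(k+a)/Γ(k+b) ≈ k^(a-b)` by Euler's limit formula.
-/

open Real

/-- Beta function `B(x,y) = ∫₀¹ (1-t)^(y-1) t^(x-1) dt`. -/
noncomputable def betaFn (x y : ℝ) : ℝ := ∫ t in (0:ℝ)..1, (1 - t) ^ (y - 1) * t ^ (x - 1)

open Filter Topology Finset
open scoped Nat

theorem betaFn_eq_Gamma_mul_Gamma_div {x y : ℝ} (hx : 0 < x) (hy : 0 < y) :
    betaFn x y = Gamma x * Gamma y / Gamma (x + y) := by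
  have hbeta : Complex.betaIntegral x y = (betaFn x y : ℂ) := by
    rw [Complex.betaIntegral, betaFn, ← intervalIntegral.integral_ofReal]
    refine intervalIntegral.integral_congr fun t ht => ?_
    rw [Set.uIcc_of_le zero_le_one] at ht
    push_cast
    rw [Complex.ofReal_cpow ht.1, Complex.ofReal_cpow (sub_nonneg.2 ht.2)]
    push_cast
    ring
  have h := Complex.betaIntegral_eq_Gamma_mul_div x y (by simpa using hx) (by simpa using hy)
  rw [hbeta, ← Complex.ofReal_add, Complex.Gamma_ofReal, Complex.Gamma_ofReal,
    Complex.Gamma_ofReal] at h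
  exact_mod_cast h

theorem Gamma_add_nat_eq_mul_prod {s : ℝ} (hs : 0 < s) (n : ℕ) :
    Gamma (s + n) = Gamma s * ∏ j ∈ range n, (s + j) := by
  induction n with
  | zero => simp
  | succ n ih =>
    rw [prod_range_succ, Nat.cast_succ, ← add_assoc, Gamma_add_one (by positivity), ih]
    ring

theorem GammaSeq_eq_div_Gamma {s : ℝ} (hs : 0 < s) (n : ℕ) :
    GammaSeq s n = n ^ s * n ! * Gamma s / Gamma (s + (n + 1)) := by
  have hprod : ∏ j ∈ range (n + 1), (s + j) ≠ 0 :=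
    prod_ne_zero_iff.2 fun j _ => by positivity
  rw [GammaSeq, ← Nat.cast_succ, Gamma_add_nat_eq_mul_prod hs]
  field_simp

theorem tendsto_Gamma_nat_add_div_Gamma_nat_add {a b : ℝ} (ha : 0 < a) (hab : a < b) :
    Tendsto (fun n : ℕ => Gamma (n + a) / Gamma (n + b)) atTop (𝓝 0) := by
  have hb : 0 < b := ha.trans hab
  have hpow : Tendsto (fun n : ℕ => (n : ℝ) ^ (a - b)) atTop (𝓝 0) :=
    (tendsto_rpow_neg_atTop (by linarith : 0 < b - a)).comp tendsto_natCast_atTop_atTop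
      |>.congr fun n => by simp
  have hlim := (((GammaSeq_tendsto_Gamma b).div (GammaSeq_tendsto_Gamma a)
    (Gamma_pos_of_pos ha).ne').mul_const (Gamma a / Gamma b)).mul hpow
  rw [mul_zero] at hlim
  refine (tendsto_add_atTop_iff_nat 1).mp (hlim.congr' ?_)
  filter_upwards [eventually_gt_atTop 0] with n hn
  have hn : (0 : ℝ) < n := Nat.cast_pos.2 hn
  rw [Pi.div_apply, GammaSeq_eq_div_Gamma ha, GammaSeq_eq_div_Gamma hb, rpow_sub hn]
  push_cast
  rw [add_comm (n + 1 : ℝ) a, add_comm (n + 1 : ℝ) b]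
  field_simp

theorem hasSum_sub_succ_of_antitone {f : ℕ → ℝ} {l : ℝ} (hf : Antitone f)
    (h : Tendsto f atTop (𝓝 l)) : HasSum (fun n => f n - f (n + 1)) (f 0 - l) := by
  rw [hasSum_iff_tendsto_nat_of_nonneg fun n => sub_nonneg.2 (hf n.le_succ)]
  simp_rw [sum_range_sub']
  exact tendsto_const_nhds.sub h

theorem Gamma_div_Gamma_sub_Gamma_div_Gamma_add_one {a b : ℝ} (ha : 0 < a) (hb : 0 < b) :
    Gamma a / Gamma b - Gamma (a + 1) / Gamma (b + 1) = (b - a) * (Gamma a / Gamma (b + 1)) := by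
  rw [Gamma_add_one ha.ne', Gamma_add_one hb.ne']
  field_simp

theorem hasSum_Gamma_nat_add_div_Gamma_nat_add_add_one {a b : ℝ} (ha : 0 < a) (hab : a < b) :
    HasSum (fun k : ℕ => Gamma (k + a) / Gamma (k + b + 1)) (Gamma a / ((b - a) * Gamma b)) := by
  have hb : 0 < b := ha.trans hab
  set f : ℕ → ℝ := fun n => Gamma (n + a) / Gamma (n + b)
  have htel (n : ℕ) : f n - f (n + 1) = (b - a) * (Gamma (n + a) / Gamma (n + b + 1)) := by
    simp only [f, Nat.cast_succ]
    rw [add_right_comm (n : ℝ) 1 a, add_right_comm (n : ℝ) 1 b,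
      ← add_sub_add_left_eq_sub b a (n : ℝ)]
    exact Gamma_div_Gamma_sub_Gamma_div_Gamma_add_one (by positivity) (by positivity)
  have hf : Antitone f := antitone_nat_of_succ_le fun n => by
    rw [← sub_nonneg, htel]
    exact mul_nonneg (sub_nonneg.2 hab.le) (by positivity)
  have hsum := (hasSum_sub_succ_of_antitone hf
    (tendsto_Gamma_nat_add_div_Gamma_nat_add ha hab)).div_const (b - a)
  simp only [htel, mul_div_cancel_left₀ _ (sub_pos.2 hab).ne', f, CharP.cast_eq_zero, zero_add,
    sub_zero, div_div, mul_comm (Gamma b)] at hsum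
  exact hsum

theorem stmt_0_general (i : ℕ) (m m' : ℝ) (hm : 0 < m) (hmm : m < m') :
    ∑' k : ℕ,
      (Real.Gamma (((i + 1 + k : ℕ) : ℝ) + m - 1) /
          (Real.Gamma i * Real.Gamma ((k + 1 : ℕ) : ℝ))) *
        betaFn ((k + 1 : ℕ) : ℝ) (m' + i)
      = Real.Gamma (m + i) / (Real.Gamma i * (m' - m)) := by
  have ha : 0 < m + i := by positivity
  have hab : m + i < m' + i := by linarith
  have hb : 0 < m' + i := ha.trans hab
  have hterm (k : ℕ) :
      Gamma (((i + 1 + k : ℕ) : ℝ) + m - 1) / (Gamma i * Gamma ((k + 1 : ℕ) : ℝ)) *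
          betaFn ((k + 1 : ℕ) : ℝ) (m' + i)
        = Gamma (m' + i) / Gamma i * (Gamma (k + (m + i)) / Gamma (k + (m' + i) + 1)) := by
    rw [betaFn_eq_Gamma_mul_Gamma_div (by positivity) hb]
    push_cast
    rw [show (i : ℝ) + 1 + k + m - 1 = k + (m + i) by ring,
      show (k : ℝ) + 1 + (m' + i) = k + (m' + i) + 1 by ring]
    field_simp
  rw [tsum_congr hterm,
    ((hasSum_Gamma_nat_add_div_Gamma_nat_add_add_one ha hab).mul_left _).tsum_eq,
    add_sub_add_right_eq_sub]
  field_simp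

/-- For integers `i ≥ 1` and reals `m' > m > 0`,
`∑_{n=i+1}^∞ Γ(n+m-1)/(Γ(i)Γ(n-i)) · B(n-i, m'+i) = Γ(m+i)/(Γ(i)(m'-m))`. -/
theorem stmt_0 (i : ℕ) (hi : 1 ≤ i) (m m' : ℝ) (hm : 0 < m) (hmm : m < m') :
    ∑' k : ℕ,
      (Real.Gamma (((i + 1 + k : ℕ) : ℝ) + m - 1) /
          (Real.Gamma i * Real.Gamma ((k + 1 : ℕ) : ℝ))) *
        betaFn ((k + 1 : ℕ) : ℝ) (m' + i)
      = Real.Gamma (m + i) / (Real.Gamma i * (m' - m)) :=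
  stmt_0_general i m m' hm hmm
end

section
/- Under the hypotheses of the homogeneous fragmentation kernel b_{k,n} = ζ(n)·h(k/n) with h continuous nonnegative on [0,1], ∫₀¹ z h(z) dz > 0, normalization ∑_{k=1}^{n−1} k b_{k,n} = n, and any real p > 1 with ∫₀¹ z^p h(z) dz < ∫₀¹ z h(z) dz, one has lim_{n→∞} (1/n^p)·∑_{k=1}^{n−1} k^p·b_{k,n} = ∫₀¹ z^p h(z) dz / ∫₀¹ z h(z) dz < 1. -/
/-! Since `b k n = ζ n * h (k / n)`, the normalisation says `ζ n * ∑_{k<n} (k/n) h(k/n) = 1`, so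
`n⁻ᵖ ∑ k^p b k n = ∑_{k<n} (k/n)^p h(k/n) / ∑_{k<n} (k/n) h(k/n)`. After dividing numerator and
denominator by `n` this is a ratio of Riemann sums of `z^p h z` and `z h z` over `[0, 1]`, which
converge to the integrals by uniform continuity; the limit of the denominator is positive. -/

open Filter intervalIntegral Finset Set Topology

theorem Finset.sum_Icc_one_sub_one_eq_sum_range {M : Type*} [AddCommMonoid M] {g : ℕ → M}
    (hg : g 0 = 0) (n : ℕ) : ∑ k ∈ Icc 1 (n - 1), g k = ∑ k ∈ range n, g k := by
  cases n with
  | zero => simp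
  | succ m =>
    rw [sum_range_succ', hg, add_zero, ← Finset.Ico_add_one_right_eq_Icc, sum_Ico_eq_sum_range]
    simp [add_comm]

theorem abs_integral_sub_mul_le {f : ℝ → ℝ} {a b ε : ℝ} (hab : a ≤ b)
    (hf : IntervalIntegrable f MeasureTheory.volume a b)
    (hε : ∀ z ∈ Ioc a b, |f z - f a| ≤ ε) :
    |(∫ z in a..b, f z) - (b - a) * f a| ≤ ε * (b - a) := by
  have hsub : (∫ z in a..b, f z) - (b - a) * f a = ∫ z in a..b, (f z - f a) := by
    rw [integral_sub hf intervalIntegrable_const, integral_const, smul_eq_mul]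
  rw [hsub, ← abs_of_nonneg (sub_nonneg.2 hab)]
  exact norm_integral_le_of_norm_le_const (f := fun z => f z - f a) fun z hz =>
    hε z (by rwa [uIoc_of_le hab] at hz)

theorem tendsto_sum_div_atTop_integral {f : ℝ → ℝ} (hf : ContinuousOn f (Icc 0 1)) :
    Tendsto (fun n : ℕ => (∑ k ∈ range n, f (k / n)) / n) atTop (𝓝 (∫ z in (0:ℝ)..1, f z)) := by
  rw [Metric.tendsto_atTop]
  intro ε hε
  obtain ⟨δ, hδ, hunif⟩ := Metric.uniformContinuousOn_iff.1
    (isCompact_Icc.uniformContinuousOn_of_continuous hf) (ε / 2) (half_pos hε)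
  obtain ⟨N, hN⟩ := exists_nat_gt δ⁻¹
  refine ⟨N + 1, fun n hn => ?_⟩
  have hn0 : (0 : ℝ) < n := by exact_mod_cast (N.succ_pos.trans_le hn)
  have hstep : (n : ℝ)⁻¹ < δ := by
    rw [inv_lt_comm₀ hn0 hδ]
    exact hN.trans (by exact_mod_cast N.lt_succ_self.trans_le hn)
  set x : ℕ → ℝ := fun k => k / n with hx
  have hx_mem : ∀ k ≤ n, x k ∈ Icc (0 : ℝ) 1 := fun k hk =>
    ⟨by positivity, div_le_one_of_le₀ (by exact_mod_cast hk) hn0.le⟩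
  have hx_succ : ∀ k, x (k + 1) - x k = (n : ℝ)⁻¹ := fun k => by
    simp only [hx]; push_cast; field_simp; ring
  have hsub : ∀ k < n, Icc (x k) (x (k + 1)) ⊆ Icc 0 1 := fun k hk =>
    Icc_subset_Icc (hx_mem k hk.le).1 (hx_mem (k + 1) hk).2
  have hint : ∀ k < n, IntervalIntegrable f MeasureTheory.volume (x k) (x (k + 1)) := fun k hk =>
    (hf.mono (hsub k hk)).intervalIntegrable_of_Icc (by linarith [hx_succ k, inv_pos.2 hn0])
  have hsplit : ∑ k ∈ range n, ∫ z in x k..x (k + 1), f z = ∫ z in (0:ℝ)..1, f z := by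
    rw [sum_integral_adjacent_intervals hint]
    simp [hx, hn0.ne']
  rw [← hsplit, sum_div]
  calc dist (∑ k ∈ range n, f (x k) / n) (∑ k ∈ range n, ∫ z in x k..x (k + 1), f z)
      ≤ ∑ k ∈ range n, ε / 2 * (n : ℝ)⁻¹ := by
        refine dist_sum_sum_le_of_le _ fun k hk => ?_
        have hk := mem_range.1 hk
        rw [dist_comm, Real.dist_eq, div_eq_inv_mul, ← hx_succ k]
        refine abs_integral_sub_mul_le (by linarith [hx_succ k, inv_pos.2 hn0]) (hint k hk)
          fun z hz => (hunif z (hsub k hk ⟨hz.1.le, hz.2⟩) _ (hx_mem k hk.le) ?_).le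
        rw [Real.dist_eq, abs_of_pos (by linarith [hz.1])]
        linarith [hz.2, hx_succ k]
    _ = ε / 2 := by rw [sum_const, card_range, nsmul_eq_mul]; field_simp
    _ < ε := half_lt_self hε

section HomogeneousKernel

variable {b : ℕ → ℕ → ℝ} {ζ : ℕ → ℝ} {h : ℝ → ℝ} {n : ℕ}

theorem sum_mul_rpow_eq_of_homogeneous (hb : ∀ k, 1 ≤ k → k ≤ n - 1 → b k n = ζ n * h (k / n))
    {q : ℝ} (hq : q ≠ 0) :
    ∑ k ∈ Icc 1 (n - 1), b k n * (k : ℝ) ^ q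
      = ζ n * n ^ q * ∑ k ∈ range n, ((k : ℝ) / n) ^ q * h (k / n) := by
  rw [← sum_Icc_one_sub_one_eq_sum_range (by simp [Real.zero_rpow hq]), mul_sum]
  refine sum_congr rfl fun k hk => ?_
  obtain ⟨hk1, hkn⟩ := mem_Icc.1 hk
  have hn : (0 : ℝ) < n := by exact_mod_cast (by omega : 0 < n)
  rw [hb k hk1 hkn, Real.div_rpow k.cast_nonneg hn.le]
  field_simp [(Real.rpow_pos_of_pos hn q).ne']

theorem one_div_rpow_mul_sum_eq_div_of_homogeneous
    (hb : ∀ k, 1 ≤ k → k ≤ n - 1 → b k n = ζ n * h (k / n))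
    (hnorm : ∑ k ∈ Icc 1 (n - 1), b k n * (k : ℝ) = n) (hn : n ≠ 0) {p : ℝ} (hp : p ≠ 0) :
    1 / (n : ℝ) ^ p * ∑ k ∈ Icc 1 (n - 1), b k n * (k : ℝ) ^ p
      = (∑ k ∈ range n, ((k : ℝ) / n) ^ p * h (k / n))
        / ∑ k ∈ range n, ((k : ℝ) / n) * h (k / n) := by
  have hn0 : (n : ℝ) ≠ 0 := Nat.cast_ne_zero.2 hn
  have hmass := sum_mul_rpow_eq_of_homogeneous hb one_ne_zero
  simp only [Real.rpow_one, hnorm] at hmass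
  have hζS : ζ n * ∑ k ∈ range n, ((k : ℝ) / n) * h (k / n) = 1 :=
    mul_left_cancel₀ hn0 (by linear_combination -hmass)
  have hS : ∑ k ∈ range n, ((k : ℝ) / n) * h (k / n) ≠ 0 := right_ne_zero_of_mul_eq_one hζS
  have hnp : (n : ℝ) ^ p ≠ 0 :=
    (Real.rpow_pos_of_pos (Nat.cast_pos.2 (Nat.pos_of_ne_zero hn)) p).ne'
  rw [sum_mul_rpow_eq_of_homogeneous hb hp, eq_div_iff hS, one_div_mul_eq_div, mul_comm (ζ n),
    mul_assoc, mul_div_cancel_left₀ _ hnp]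
  linear_combination (∑ k ∈ range n, ((k : ℝ) / n) ^ p * h (k / n)) * hζS

end HomogeneousKernel

theorem stmt_8_general (b : ℕ → ℕ → ℝ) (ζ : ℕ → ℝ) (h : ℝ → ℝ) (p : ℝ) (hp : 1 < p)
    (hcont : ContinuousOn h (Set.Icc 0 1))
    (hint : 0 < ∫ z in (0:ℝ)..1, z * h z)
    (hintp : (∫ z in (0:ℝ)..1, z ^ p * h z) < ∫ z in (0:ℝ)..1, z * h z)
    (hb : ∀ n, 2 ≤ n → ∀ k, 1 ≤ k → k ≤ n - 1 → b k n = ζ n * h ((k : ℝ) / n))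
    (hnorm : ∀ n, 2 ≤ n → ∑ k ∈ Finset.Icc 1 (n - 1), b k n * (k : ℝ) = n) :
    Tendsto (fun n : ℕ =>
        (1 / (n : ℝ) ^ p) * ∑ k ∈ Finset.Icc 1 (n - 1), b k n * (k : ℝ) ^ p)
      atTop
      (nhds ((∫ z in (0:ℝ)..1, z ^ p * h z) / ∫ z in (0:ℝ)..1, z * h z)) ∧
    (∫ z in (0:ℝ)..1, z ^ p * h z) / (∫ z in (0:ℝ)..1, z * h z) < 1 := by
  have hp0 : 0 < p := one_pos.trans hp
  have hmass := tendsto_sum_div_atTop_integral (f := fun z => z * h z) (continuousOn_id.mul hcont)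
  have hmoment := tendsto_sum_div_atTop_integral (f := fun z => z ^ p * h z)
    ((continuousOn_id.rpow_const fun _ _ => Or.inr hp0.le).mul hcont)
  refine ⟨(hmoment.div hmass hint.ne').congr' ?_, (div_lt_one hint).2 hintp⟩
  filter_upwards [eventually_ge_atTop 2] with n hn
  rw [Pi.div_apply,
    one_div_rpow_mul_sum_eq_div_of_homogeneous (hb n hn) (hnorm n hn) (by omega) hp0.ne',
    div_div_div_cancel_right₀ (Nat.cast_ne_zero.2 (by omega))]

/-- Under the homogeneous-kernel hypotheses and for real `p > 1` with
`∫₀¹ z^p h(z) dz < ∫₀¹ z h(z) dz`, one has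
`(1/n^p)·∑_{k=1}^{n−1} k^p·b_{k,n} → ∫₀¹ z^p h / ∫₀¹ z h < 1`. -/
theorem stmt_8 (b : ℕ → ℕ → ℝ) (ζ : ℕ → ℝ) (h : ℝ → ℝ) (p : ℝ) (hp : 1 < p)
    (hcont : ContinuousOn h (Set.Icc 0 1))
    (hnn : ∀ z ∈ Set.Icc (0:ℝ) 1, 0 ≤ h z)
    (hint : 0 < ∫ z in (0:ℝ)..1, z * h z)
    (hintp : (∫ z in (0:ℝ)..1, z ^ p * h z) < ∫ z in (0:ℝ)..1, z * h z)
    (hζ : ∀ n, 2 ≤ n → 0 < ζ n)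
    (hb : ∀ n, 2 ≤ n → ∀ k, 1 ≤ k → k ≤ n - 1 → b k n = ζ n * h ((k : ℝ) / n))
    (hnorm : ∀ n, 2 ≤ n → ∑ k ∈ Finset.Icc 1 (n - 1), b k n * (k : ℝ) = n) :
    Tendsto (fun n : ℕ =>
        (1 / (n : ℝ) ^ p) * ∑ k ∈ Finset.Icc 1 (n - 1), b k n * (k : ℝ) ^ p)
      atTop
      (nhds ((∫ z in (0:ℝ)..1, z ^ p * h z) / ∫ z in (0:ℝ)..1, z * h z)) ∧
    (∫ z in (0:ℝ)..1, z ^ p * h z) / (∫ z in (0:ℝ)..1, z * h z) < 1 :=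
  stmt_8_general b ζ h p hp hcont hint hintp hb hnorm
end

section
/- Let m ≥ 1 and suppose (g_n) and (d_n) are nonnegative sequences with d_n/g_n ≥ 1 + (m'−1)/n for all large n, where m' > m. Define Γ_n = g_n·((1+1/n)^m − 1) − d_n·(1 − (1−1/n)^m). Then Γ_n ≤ 0 for all sufficiently large n; in particular limsup_{n→∞} Γ_n ≤ 0. -/
/-!
Put `x = 1 / n`. Since `d ≥ (1 + (m' - 1) x) g`, it suffices that
`(1 + x) ^ m - 1 ≤ (1 + (m' - 1) x) (1 - (1 - x) ^ m)` for small `x > 0`. The difference of the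
two sides is `x ^ 2 ((m' - 1) B(x) / x - A(x) / x ^ 2)` with `B(x) = 1 - (1 - x) ^ m` and
`A(x) = (1 + x) ^ m + (1 - x) ^ m - 2`. As `x → 0⁺`, `B(x) / x → m` and, by l'Hôpital,
`A(x) / x ^ 2 → m (m - 1)`, so the bracket tends to `m (m' - m) > 0`.
-/

open Filter Set
open scoped Topology

namespace Real

lemma hasDerivAt_one_add_mul_rpow {c x : ℝ} (p : ℝ) (hx : 0 < 1 + c * x) :
    HasDerivAt (fun x : ℝ => (1 + c * x) ^ p) (c * (p * (1 + c * x) ^ (p - 1))) x := by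
  have h := (((hasDerivAt_id x).const_mul c).const_add 1).rpow_const (p := p) (Or.inl hx.ne')
  simpa [mul_comm, mul_left_comm, mul_assoc] using h

lemma tendsto_one_add_mul_rpow_sub_one_div (c p : ℝ) :
    Tendsto (fun x : ℝ => ((1 + c * x) ^ p - 1) / x) (𝓝[≠] 0) (𝓝 (c * p)) := by
  have h := hasDerivAt_iff_tendsto_slope.mp (hasDerivAt_one_add_mul_rpow (c := c) (x := 0) p
    (by simp))
  simpa [slope_fun_def_field] using h

lemma tendsto_rpow_second_difference (p : ℝ) :
    Tendsto (fun x : ℝ => ((1 + x) ^ p + (1 - x) ^ p - 2) / x ^ 2) (𝓝[>] 0)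
      (𝓝 (p * (p - 1))) := by
  have hderiv : ∀ x ∈ Ioo (-1 : ℝ) 1, HasDerivAt (fun x : ℝ => (1 + x) ^ p + (1 - x) ^ p - 2)
      (p * (1 + x) ^ (p - 1) - p * (1 - x) ^ (p - 1)) x := by
    intro x hx
    have hplus := hasDerivAt_one_add_mul_rpow (c := 1) (x := x) p (by linarith [hx.1])
    have hminus := hasDerivAt_one_add_mul_rpow (c := -1) (x := x) p (by linarith [hx.2])
    simp only [one_mul, neg_one_mul, ← sub_eq_add_neg] at hplus hminus
    exact ((hplus.add hminus).sub_const 2).congr_deriv (by ring)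
  have hzero : Tendsto (fun x : ℝ => (1 + x) ^ p + (1 - x) ^ p - 2) (𝓝[>] 0) (𝓝 0) := by
    have h := (hderiv 0 (by norm_num)).continuousAt.tendsto
    norm_num at h
    exact h.mono_left nhdsWithin_le_nhds
  have hsq : Tendsto (fun x : ℝ => x ^ 2) (𝓝[>] 0) (𝓝 0) := by
    simpa using ((continuous_pow 2).tendsto (0 : ℝ)).mono_left nhdsWithin_le_nhds
  have hquot : Tendsto (fun x : ℝ => (p * (1 + x) ^ (p - 1) - p * (1 - x) ^ (p - 1)) / (2 * x))
      (𝓝[>] 0) (𝓝 (p * (p - 1))) := by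
    have hplus := tendsto_one_add_mul_rpow_sub_one_div 1 (p - 1)
    have hminus := tendsto_one_add_mul_rpow_sub_one_div (-1) (p - 1)
    simp only [one_mul, neg_one_mul, ← sub_eq_add_neg] at hplus hminus
    have h := ((hplus.sub hminus).const_mul (p / 2)).mono_left (nhdsGT_le_nhdsNE 0)
    convert h.congr' _ using 2
    · ring
    · filter_upwards [self_mem_nhdsWithin] with x hx
      field_simp
      ring
  exact HasDerivAt.lhopital_zero_right_on_Ioo one_pos
    (fun x hx => hderiv x ⟨by linarith [hx.1], hx.2⟩)
    (fun x _ => by simpa [mul_comm] using hasDerivAt_pow 2 x)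
    (fun x hx => by linarith [hx.1]) hzero hsq hquot

end Real

open Real

lemma eventually_one_add_rpow_sub_one_le {m m' : ℝ} (hm : 0 < m) (hmm : m < m') :
    ∀ᶠ x in 𝓝[>] 0, (1 + x) ^ m - 1 ≤ (1 + (m' - 1) * x) * (1 - (1 - x) ^ m) := by
  have hfirst : Tendsto (fun x : ℝ => (1 - (1 - x) ^ m) / x) (𝓝[>] 0) (𝓝 m) := by
    have h := (tendsto_one_add_mul_rpow_sub_one_div (-1) m).neg.mono_left (nhdsGT_le_nhdsNE 0)
    simpa only [neg_one_mul, ← sub_eq_add_neg, ← neg_div, neg_sub, neg_neg] using h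
  have hquot : Tendsto (fun x : ℝ =>
      (m' - 1) * ((1 - (1 - x) ^ m) / x) - ((1 + x) ^ m + (1 - x) ^ m - 2) / x ^ 2)
      (𝓝[>] 0) (𝓝 (m * (m' - m))) := by
    convert (hfirst.const_mul (m' - 1)).sub (tendsto_rpow_second_difference m) using 2
    ring
  filter_upwards [hquot.eventually (eventually_gt_nhds (mul_pos hm (sub_pos.mpr hmm))),
    self_mem_nhdsWithin] with x hpos hx
  have hx : 0 < x := hx
  have hdiff : (1 + (m' - 1) * x) * (1 - (1 - x) ^ m) - ((1 + x) ^ m - 1) =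
      x ^ 2 * ((m' - 1) * ((1 - (1 - x) ^ m) / x) - ((1 + x) ^ m + (1 - x) ^ m - 2) / x ^ 2) := by
    field_simp
    ring
  have hprod := mul_pos (pow_pos hx 2) hpos
  rw [← hdiff] at hprod
  linarith

/-- `Γ_n` of the statement is `gammaTerm m (g n) (d n) (1 / n)`. -/
noncomputable def gammaTerm (m g d x : ℝ) : ℝ :=
  g * ((1 + x) ^ m - 1) - d * (1 - (1 - x) ^ m)

lemma gammaTerm_nonpos {m m' g d x : ℝ} (hm : 0 ≤ m) (hg : 0 < g) (hx₀ : 0 ≤ x) (hx₁ : x ≤ 1)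
    (hratio : 1 + (m' - 1) * x ≤ d / g)
    (hkey : (1 + x) ^ m - 1 ≤ (1 + (m' - 1) * x) * (1 - (1 - x) ^ m)) :
    gammaTerm m g d x ≤ 0 := by
  have hB : 0 ≤ 1 - (1 - x) ^ m := sub_nonneg.mpr (rpow_le_one (by linarith) (by linarith) hm)
  have hd : g * (1 + (m' - 1) * x) ≤ d := by rwa [le_div_iff₀' hg] at hratio
  rw [gammaTerm, sub_nonpos]
  calc g * ((1 + x) ^ m - 1) ≤ g * ((1 + (m' - 1) * x) * (1 - (1 - x) ^ m)) := by gcongr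
    _ = g * (1 + (m' - 1) * x) * (1 - (1 - x) ^ m) := by ring
    _ ≤ d * (1 - (1 - x) ^ m) := by gcongr

theorem stmt_11_general (m m' : ℝ) (hm : 1 ≤ m) (hmm : m < m') (g d : ℕ → ℝ)
    (hg : ∀ n, 0 < g n)
    (hratio : ∀ᶠ n : ℕ in atTop, d n / g n ≥ 1 + (m' - 1) / n) :
    (∀ᶠ n : ℕ in atTop,
        g n * ((1 + 1 / (n : ℝ)) ^ m - 1) - d n * (1 - (1 - 1 / (n : ℝ)) ^ m) ≤ 0) ∧
    Filter.limsup
        (fun n : ℕ =>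
          g n * ((1 + 1 / (n : ℝ)) ^ m - 1) - d n * (1 - (1 - 1 / (n : ℝ)) ^ m))
        atTop ≤ 0 := by
  have hinv : Tendsto (fun n : ℕ => 1 / (n : ℝ)) atTop (𝓝[>] 0) := by
    simpa only [one_div, Function.comp_def] using
      (tendsto_inv_atTop_nhdsGT_zero (𝕜 := ℝ)).comp tendsto_natCast_atTop_atTop
  have hΓ : ∀ᶠ n : ℕ in atTop, gammaTerm m (g n) (d n) (1 / n) ≤ 0 := by
    filter_upwards [hinv.eventually (eventually_one_add_rpow_sub_one_le (by linarith) hmm),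
      hratio, eventually_ge_atTop 1] with n hkey hr hn
    have hn : (1 : ℝ) ≤ n := by exact_mod_cast hn
    refine gammaTerm_nonpos (by linarith) (hg n) (by positivity)
      ((div_le_one (by positivity)).mpr hn) ?_ hkey
    rwa [mul_one_div]
  -- `limsup` is an `sInf`, and a real `sInf` is `≤ 0` as soon as the set contains `0`.
  exact ⟨hΓ, Real.sInf_nonpos' ⟨0, hΓ, le_rfl⟩⟩

/-- If `m' > m ≥ 1`, `g_n > 0`, `d_n ≥ 0`, and
`d_n/g_n ≥ 1 + (m'−1)/n` for all large `n`, then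
`Γ_n = g_n((1+1/n)^m − 1) − d_n(1 − (1−1/n)^m) ≤ 0` for all large `n`;
in particular `limsup Γ_n ≤ 0`. -/
theorem stmt_11 (m m' : ℝ) (hm : 1 ≤ m) (hmm : m < m') (g d : ℕ → ℝ)
    (hg : ∀ n, 0 < g n) (hd : ∀ n, 0 ≤ d n)
    (hratio : ∀ᶠ n : ℕ in atTop, d n / g n ≥ 1 + (m' - 1) / n) :
    (∀ᶠ n : ℕ in atTop,
        g n * ((1 + 1 / (n : ℝ)) ^ m - 1) - d n * (1 - (1 - 1 / (n : ℝ)) ^ m) ≤ 0) ∧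
    Filter.limsup
        (fun n : ℕ =>
          g n * ((1 + 1 / (n : ℝ)) ^ m - 1) - d n * (1 - (1 - 1 / (n : ℝ)) ^ m))
        atTop ≤ 0 :=
  stmt_11_general m m' hm hmm g d hg hratio
end

section
/- Consider the formal eigenvalue problem of the growth-fragmentation system with g_n = r·n for r > 0 and d_n = 0: λ f₁ = −r f₁ + ∑_{i=2}^∞ a_i b_{1,i} f_i and λ f_n = r(n−1) f_{n−1} − (a_n + rn) f_n + ∑_{i=n+1}^∞ a_i b_{n,i} f_i for n ≥ 2, where ∑_{k=1}^{i−1} k·b_{k,i} = i for all i ≥ 2 and b_{k,i} ≥ 0, a_i ≥ 0. If (f_n) is a solution with ∑ n|f_n| < ∞, ∑ n·a_n|f_n| < ∞, and all rearrangements of double series are absolutely convergent, then λ·∑_{n=1}^∞ n f_n = r·∑_{n=1}^∞ n f_n. Hence if ∑ n f_n ≠ 0 then λ = r. -/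
/-!
Write `u n = n f n`. Multiplying the `n`-th equation by `n` and shifting indices, the growth
terms become `r u (n-1) + r ((n-1) u (n-1) - n u n)`, while the fragmentation terms have zero total
first moment: the moment flux `k a_i b_{k,i} f_i` (for `k < i`) is absolutely summable, its rows
sum to the gain moments and, by `∑ k b_{k,i} = i`, its columns to the loss moments `i a_i f_i`.
Hence `r (N u N)` converges to `(r - λ) ∑ u`; a nonzero limit would make `u N` comparable to
`1 / N`, contradicting the summability of `u`.
-/

open Filter Topology

theorem eq_zero_of_summable_of_tendsto_natCast_mul {u : ℕ → ℝ} {L : ℝ} (hu : Summable u)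
    (h : Tendsto (fun n : ℕ => (n : ℝ) * u n) atTop (𝓝 L)) : L = 0 := by
  by_contra hL
  have hpos : 0 < |L| := abs_pos.mpr hL
  have hbig : ∀ᶠ n : ℕ in atTop, |L| / 2 < |(n : ℝ) * u n| :=
    h.abs.eventually (lt_mem_nhds (by linarith))
  have hO : (fun n : ℕ => 1 / (n : ℝ)) =O[atTop] u := by
    refine Asymptotics.IsBigO.of_bound (2 / |L|) ?_
    filter_upwards [hbig, eventually_gt_atTop 0] with n hn hn0
    have hn0' : (0 : ℝ) < n := Nat.cast_pos.mpr hn0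
    rw [abs_mul, Nat.abs_cast] at hn
    rw [Real.norm_eq_abs, Real.norm_eq_abs, abs_of_pos (one_div_pos.mpr hn0'), div_le_iff₀ hn0']
    calc (1 : ℝ) = 2 / |L| * (|L| / 2) := by field_simp
      _ ≤ 2 / |L| * (n * |u n|) := by gcongr
      _ = 2 / |L| * |u n| * n := by ring
  exact Real.not_summable_one_div_natCast (summable_of_isBigO_nat hu hO)

theorem tendsto_of_hasSum_sub_succ {w : ℕ → ℝ} {L : ℝ}
    (h : HasSum (fun n => w (n + 1) - w n) L) : Tendsto w atTop (𝓝 (w 0 + L)) := by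
  simpa only [Finset.sum_range_sub, add_sub_cancel] using h.tendsto_sum_nat.const_add (w 0)

theorem sum_range_mul_natCast_eq_sum_Icc (b : ℕ → ℕ → ℝ) {i : ℕ} (hi : 1 ≤ i) :
    ∑ k ∈ Finset.range i, b k i * k = ∑ k ∈ Finset.Icc 1 (i - 1), b k i * k := by
  rw [Finset.sum_range_eq_add_Ico _ hi, Nat.cast_zero, mul_zero, zero_add,
    ← Finset.Ico_add_one_right_eq_Icc, Nat.sub_add_cancel hi]

section Fragmentation

variable (a : ℕ → ℝ) (b : ℕ → ℕ → ℝ) (f : ℕ → ℝ)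

noncomputable def fragGain (n : ℕ) : ℝ :=
  ∑' i : ℕ, a (n + 1 + i) * b n (n + 1 + i) * f (n + 1 + i)

-- Monomers do not fragment: the equation for `f 1` has no loss term.
def fragLoss (n : ℕ) : ℝ := if 2 ≤ n then a n * f n else 0

def fragMomentFlux (p : ℕ × ℕ) : ℝ :=
  if p.1 < p.2 then (p.1 : ℝ) * a p.2 * b p.1 p.2 * f p.2 else 0

variable {a b f}

theorem summable_fragMomentFlux
    (h : Summable (fun p : ℕ × ℕ => (p.1 : ℝ) * a p.2 * b p.1 p.2 * |f p.2|)) :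
    Summable (fragMomentFlux a b f) := by
  refine .of_norm_bounded h.abs fun p => ?_
  unfold fragMomentFlux
  split_ifs
  · simp only [Real.norm_eq_abs, abs_mul, abs_abs, le_refl]
  · simp only [norm_zero]; positivity

theorem fragMomentFlux_of_le {p : ℕ × ℕ} (h : p.2 ≤ p.1) : fragMomentFlux a b f p = 0 :=
  if_neg (not_lt.mpr h)

theorem hasSum_fragMomentFlux_row (h : Summable (fragMomentFlux a b f)) (n : ℕ) :
    HasSum (fun i => fragMomentFlux a b f (n, i)) (n * fragGain a b f n) := by
  have hhead : ∑ i ∈ Finset.range (n + 1), fragMomentFlux a b f (n, i) = 0 :=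
    Finset.sum_eq_zero fun i hi =>
      fragMomentFlux_of_le (Nat.lt_succ_iff.mp (Finset.mem_range.mp hi))
  have hshift : ∀ i, fragMomentFlux a b f (n, i + (n + 1)) =
      n * (a (n + 1 + i) * b n (n + 1 + i) * f (n + 1 + i)) := fun i => by
    rw [fragMomentFlux, if_pos (by simp only; omega), add_comm i]; ring
  rw [← hasSum_nat_add_iff' (n + 1), hhead, sub_zero, fragGain, ← tsum_mul_left]
  simpa only [hshift] using ((summable_nat_add_iff (n + 1)).mpr (h.prod_factor n)).hasSum

theorem hasSum_fragMomentFlux_column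
    (hmass : ∀ i, 2 ≤ i → ∑ k ∈ Finset.Icc 1 (i - 1), b k i * (k : ℝ) = i) (i : ℕ) :
    HasSum (fun n => fragMomentFlux a b f (n, i)) (i * fragLoss a f i) := by
  convert hasSum_sum_of_ne_finset_zero (L := .unconditional ℕ)
    (f := fun n => fragMomentFlux a b f (n, i)) (s := Finset.range i)
    fun n hn => fragMomentFlux_of_le (not_lt.mp (Finset.mem_range.not.mp hn))
  have hterm : ∀ n ∈ Finset.range i, fragMomentFlux a b f (n, i) = a i * f i * (b n i * n) :=
    fun n hn => by rw [fragMomentFlux, if_pos (Finset.mem_range.mp hn)]; ring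
  rw [Finset.sum_congr rfl hterm, ← Finset.mul_sum, fragLoss]
  split_ifs with hi
  · rw [sum_range_mul_natCast_eq_sum_Icc b (by omega), hmass i hi]; ring
  · interval_cases i <;> simp

theorem hasSum_natCast_mul_fragGain_sub_fragLoss
    (hmass : ∀ i, 2 ≤ i → ∑ k ∈ Finset.Icc 1 (i - 1), b k i * (k : ℝ) = i)
    (hsum : Summable (fun p : ℕ × ℕ => (p.1 : ℝ) * a p.2 * b p.1 p.2 * |f p.2|)) :
    HasSum (fun n : ℕ => (n : ℝ) * (fragGain a b f n - fragLoss a f n)) 0 := by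
  have hflux := summable_fragMomentFlux hsum
  have hrows := hflux.hasSum.prod_fiberwise (hasSum_fragMomentFlux_row hflux)
  have hcols := ((Equiv.prodComm ℕ ℕ).hasSum_iff.mpr hflux.hasSum).prod_fiberwise
    (hasSum_fragMomentFlux_column hmass)
  simpa only [mul_sub, sub_self] using hrows.sub hcols

end Fragmentation

theorem stmt_15_general (r lam : ℝ) (a : ℕ → ℝ) (b : ℕ → ℕ → ℝ) (f : ℕ → ℝ)
    (hmass : ∀ i, 2 ≤ i → ∑ k ∈ Finset.Icc 1 (i - 1), b k i * (k : ℝ) = i)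
    (hsum1 : Summable (fun n : ℕ => (n : ℝ) * |f n|))
    (hsum3 : Summable (fun p : ℕ × ℕ => (p.1 : ℝ) * a p.2 * b p.1 p.2 * |f p.2|))
    (heq1 : lam * f 1 = -r * f 1 + ∑' i : ℕ, a (i + 2) * b 1 (i + 2) * f (i + 2))
    (heqn : ∀ n, 2 ≤ n →
      lam * f n = r * ((n : ℝ) - 1) * f (n - 1) - (a n + r * n) * f n +
        ∑' i : ℕ, a (n + 1 + i) * b n (n + 1 + i) * f (n + 1 + i)) :
    lam * ∑' n : ℕ, (n : ℝ) * f n = r * ∑' n : ℕ, (n : ℝ) * f n ∧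
      ((∑' n : ℕ, (n : ℝ) * f n) ≠ 0 → lam = r) := by
  set u : ℕ → ℝ := fun n => n * f n
  set S := ∑' n, u n
  have hu : Summable u := summable_abs_iff.mp (by simpa only [u, abs_mul, Nat.abs_cast] using hsum1)
  have heig : ∀ m : ℕ, lam * f (m + 1) =
      r * m * f m - r * (m + 1) * f (m + 1) - fragLoss a f (m + 1) + fragGain a b f (m + 1) := by
    rintro (_ | m)
    · simp only [fragLoss, fragGain, heq1]
      norm_num [add_comm 2]
    · simp only [fragLoss, fragGain, if_pos (by omega : 2 ≤ m + 1 + 1),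
        heqn (m + 1 + 1) (by omega)]
      push_cast
      ring
  have hmoment := (hasSum_nat_add_iff' 1).mpr (hasSum_natCast_mul_fragGain_sub_fragLoss hmass hsum3)
  have hu' := (hasSum_nat_add_iff' 1).mpr hu.hasSum
  simp only [Finset.sum_range_one, Nat.cast_zero, zero_mul, sub_zero, u] at hmoment hu'
  set w : ℕ → ℝ := fun n => n * (r * u n)
  have hdiff : HasSum (fun m => w (m + 1) - w m) ((r - lam) * S) := by
    rw [sub_mul, ← add_zero (r * S - lam * S)]
    refine ((hu.hasSum.mul_left r).sub (hu'.mul_left lam)).add hmoment |>.congr_fun fun m => ?_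
    simp only [w, u]
    push_cast
    linear_combination (m + 1 : ℝ) * heig m
  have hzero : (r - lam) * S = 0 := by
    have hw := tendsto_of_hasSum_sub_succ hdiff
    simp only [w, Nat.cast_zero, zero_mul, zero_add] at hw
    exact eq_zero_of_summable_of_tendsto_natCast_mul (hu.mul_left r) hw
  refine ⟨by linear_combination -hzero, fun hS => ?_⟩
  linarith [(mul_eq_zero.mp hzero).resolve_right hS]

/-- For the eigenvalue problem of the growth-fragmentation system with
`g_n = r n`, `d_n = 0`: if `(f_n)` solves
`λ f₁ = −r f₁ + ∑_{i≥2} a_i b_{1,i} f_i` and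
`λ f_n = r(n−1) f_{n−1} − (a_n + r n) f_n + ∑_{i>n} a_i b_{n,i} f_i` (`n ≥ 2`),
with mass normalization `∑_{k=1}^{i−1} k b_{k,i} = i`, `a, b ≥ 0`, and the summability
assumptions listed, then `λ ∑ n f_n = r ∑ n f_n`; hence `∑ n f_n ≠ 0 → λ = r`. -/
theorem stmt_15 (r lam : ℝ) (hr : 0 < r) (a : ℕ → ℝ) (b : ℕ → ℕ → ℝ) (f : ℕ → ℝ)
    (ha : ∀ i, 0 ≤ a i) (hbnn : ∀ k i, 0 ≤ b k i)
    (hmass : ∀ i, 2 ≤ i → ∑ k ∈ Finset.Icc 1 (i - 1), b k i * (k : ℝ) = i)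
    (hsum1 : Summable (fun n : ℕ => (n : ℝ) * |f n|))
    (hsum2 : Summable (fun n : ℕ => (n : ℝ) * a n * |f n|))
    (hsum3 : Summable (fun p : ℕ × ℕ => (p.1 : ℝ) * a p.2 * b p.1 p.2 * |f p.2|))
    (heq1 : lam * f 1 = -r * f 1 + ∑' i : ℕ, a (i + 2) * b 1 (i + 2) * f (i + 2))
    (heqn : ∀ n, 2 ≤ n →
      lam * f n = r * ((n : ℝ) - 1) * f (n - 1) - (a n + r * n) * f n +
        ∑' i : ℕ, a (n + 1 + i) * b n (n + 1 + i) * f (n + 1 + i)) :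
    lam * ∑' n : ℕ, (n : ℝ) * f n = r * ∑' n : ℕ, (n : ℝ) * f n ∧
      ((∑' n : ℕ, (n : ℝ) * f n) ≠ 0 → lam = r) :=
  stmt_15_general r lam a b f hmass hsum1 hsum3 heq1 heqn
end

section
/- Let λ > 0, m ≥ 1 real, and let (g_n)_{n≥1} satisfy c·n^q ≤ g_n ≤ C·n^q for constants C ≥ c > 0 and q with 1 < q ≤ m+1. Define the operator R_λ on nonnegative sequences by (R_λ f)_n = ∑_{i=1}^{n} f_i/(λ+g_n) · ∏_{j=i}^{n−1} g_j/(λ+g_j). Then R_λ is unbounded on the weighted ℓ¹ space X_m with norm ‖f‖ = ∑ n^m|f_n|; specifically, there exists g_λ > 0 such that for every nonnegative f ∈ X_m, ‖R_λ f‖ ≥ g_λ·C^{−1}·∑_{i=1}^∞ f_i·∑_{n=i}^∞ n^{m−q}, and ∑_{n=i}^∞ n^{m−q} = ∞ since m−q ≥ −1. -/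
open Finset

lemma stmt16_shift_tsum (w : ℕ → ENNReal) (a : ℕ) :
    (∑' k : ℕ, w (a + k)) = ∑' n : ℕ, if a ≤ n then w n else 0 := by
  have hinj : Function.Injective (fun k : ℕ => a + k) := add_right_injective a
  have h := hinj.tsum_eq (f := fun n => if a ≤ n then w n else 0) ?_
  · rw [← h]
    apply tsum_congr; intro k
    exact (if_pos (Nat.le_add_right a k)).symm
  · intro n hn
    simp only [Function.mem_support] at hn
    by_cases h : a ≤ n
    · exact ⟨n - a, show a + (n - a) = n by omega⟩
    · rw [if_neg h] at hn
      exact absurd rfl hn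

lemma stmt16_lemA (u : ℕ → ℕ → ENNReal) :
    (∑' n : ℕ, ∑ i ∈ Icc 1 n, u i n) = ∑' i : ℕ, ∑' k : ℕ, u (i + 1) (i + 1 + k) := by
  have h1 : ∀ n : ℕ, ∑ i ∈ Icc 1 n, u i n
      = ∑' i : ℕ, if i + 1 ≤ n then u (i + 1) n else 0 := by
    intro n
    rw [tsum_eq_sum (s := Finset.range n) (by
      intro b hb
      simp only [Finset.mem_range, not_lt] at hb
      rw [if_neg (by omega)])]
    rw [← Finset.Ico_add_one_right_eq_Icc, Finset.sum_Ico_eq_sum_range]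
    simp only [Nat.succ_sub_one, Nat.add_sub_cancel]
    apply Finset.sum_congr rfl
    intro i hi
    simp only [Finset.mem_range] at hi
    rw [if_pos (by omega)]
    congr 1
    omega
  calc (∑' n : ℕ, ∑ i ∈ Icc 1 n, u i n)
      = ∑' n : ℕ, ∑' i : ℕ, if i + 1 ≤ n then u (i + 1) n else 0 := by
        exact tsum_congr h1
    _ = ∑' i : ℕ, ∑' n : ℕ, if i + 1 ≤ n then u (i + 1) n else 0 := ENNReal.tsum_comm
    _ = ∑' i : ℕ, ∑' k : ℕ, u (i + 1) (i + 1 + k) := by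
        apply tsum_congr; intro i
        exact (stmt16_shift_tsum (fun n => u (i + 1) n) (i + 1)).symm

/-- Let `λ > 0`, `m ≥ 1`, `1 < q ≤ m+1`, and `c n^q ≤ g_n ≤ C n^q`.
Define `(R_λ f)_n = ∑_{i=1}^{n} f_i/(λ+g_n) ∏_{j=i}^{n−1} g_j/(λ+g_j)`. Then there is
`g_λ > 0` with `‖R_λ f‖_{[m]} ≥ g_λ C⁻¹ ∑_{i≥1} f_i ∑_{n=i}^∞ n^{m−q}` for nonnegative
`f`, the inner sum diverges, and `R_λ` is unbounded: `‖R_λ f‖_{[m]} = ∞` whenever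
`f ≥ 0` and `f_1 > 0`. -/
theorem stmt_16 (lam m q c C : ℝ) (hlam : 0 < lam) (hm : 1 ≤ m)
    (hq1 : 1 < q) (hqm : q ≤ m + 1) (hc : 0 < c) (hcC : c ≤ C)
    (g : ℕ → ℝ) (hgpos : ∀ n, 1 ≤ n → 0 < g n)
    (hg : ∀ n : ℕ, 1 ≤ n → c * (n : ℝ) ^ q ≤ g n ∧ g n ≤ C * (n : ℝ) ^ q) :
    ∃ glam : ℝ, 0 < glam ∧
      (∀ f : ℕ → ℝ, (∀ n, 0 ≤ f n) →
        (∑' n : ℕ, ENNReal.ofReal ((n : ℝ) ^ m *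
            ∑ i ∈ Finset.Icc 1 n, f i / (lam + g n) *
              ∏ j ∈ Finset.Ico i n, g j / (lam + g j)))
          ≥ ENNReal.ofReal (glam * C⁻¹) *
              ∑' i : ℕ, ENNReal.ofReal (f (i + 1)) *
                ∑' k : ℕ, ENNReal.ofReal (((i + 1 + k : ℕ) : ℝ) ^ (m - q))) ∧
      (∀ i : ℕ, 1 ≤ i →
        (∑' k : ℕ, ENNReal.ofReal (((i + k : ℕ) : ℝ) ^ (m - q))) = ⊤) ∧
      (∀ f : ℕ → ℝ, (∀ n, 0 ≤ f n) → 0 < f 1 →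
        ¬ Summable (fun n : ℕ => (n : ℝ) ^ m *
            ∑ i ∈ Finset.Icc 1 n, f i / (lam + g n) *
              ∏ j ∈ Finset.Ico i n, g j / (lam + g j))) := by
  have hC : 0 < C := lt_of_lt_of_le hc hcC
  have hq0 : 0 < q := lt_trans zero_lt_one hq1
  -- the summable series of inverse g's
  set v : ℕ → ℝ := fun j => if 1 ≤ j then (g j)⁻¹ else 0 with hv
  have hvnn : ∀ j, 0 ≤ v j := by
    intro j
    by_cases hj : 1 ≤ j
    · simp only [hv, if_pos hj]
      exact inv_nonneg.mpr (hgpos j hj).le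
    · simp [hv, hj]
  have hvsum : Summable v := by
    refine Summable.of_nonneg_of_le (f := fun j : ℕ => c⁻¹ * (((j : ℝ)) ^ q)⁻¹) hvnn ?_
      ((Real.summable_nat_rpow_inv.mpr hq1).mul_left c⁻¹)
    · intro j
      by_cases hj : 1 ≤ j
      · simp only [hv, if_pos hj]
        have hjq : 0 < c * (j : ℝ) ^ q := by
          apply mul_pos hc
          apply Real.rpow_pos_of_pos
          exact_mod_cast Nat.lt_of_lt_of_le Nat.zero_lt_one hj
        have := (hg j hj).1
        calc (g j)⁻¹ ≤ (c * (j : ℝ) ^ q)⁻¹ := inv_anti₀ hjq this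
          _ = c⁻¹ * (((j : ℝ)) ^ q)⁻¹ := by rw [mul_inv]
      · have hj0 : j = 0 := by omega
        subst hj0
        simp [hv, Real.zero_rpow (ne_of_gt hq0)]
  set T := ∑' j, v j with hTdef
  have hT0 : 0 ≤ T := tsum_nonneg hvnn
  set E := Real.exp (-(lam * T)) with hEdef
  have hE : 0 < E := Real.exp_pos _
  have hlamC : 0 < lam + C := by linarith
  set K := E / (lam + C) with hKdef
  have hK : 0 < K := div_pos hE hlamC
  have hKeq : E * C / (lam + C) * C⁻¹ = K := by
    rw [hKdef, div_mul_eq_mul_div, mul_assoc, mul_inv_cancel₀ hC.ne', mul_one]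
  -- key pointwise inequality
  have key : ∀ (f : ℕ → ℝ), (∀ n, 0 ≤ f n) → ∀ n, ∀ i ∈ Icc 1 n,
      K * f i * (n : ℝ) ^ (m - q)
        ≤ (n : ℝ) ^ m * (f i / (lam + g n) * ∏ j ∈ Ico i n, g j / (lam + g j)) := by
    intro f hf n i hi
    simp only [Finset.mem_Icc] at hi
    obtain ⟨hi1, hin⟩ := hi
    have hn1 : 1 ≤ n := le_trans hi1 hin
    have hn1R : (1 : ℝ) ≤ (n : ℝ) := by exact_mod_cast hn1
    have hn0R : (0 : ℝ) < (n : ℝ) := by linarith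
    have hnq : (1 : ℝ) ≤ (n : ℝ) ^ q := Real.one_le_rpow hn1R hq0.le
    have hgn := hgpos n hn1
    have hden : 0 < lam + g n := by linarith
    have hdenC : 0 < (lam + C) * (n : ℝ) ^ q := by positivity
    have hbig : lam + g n ≤ (lam + C) * (n : ℝ) ^ q := by
      have h2 := (hg n hn1).2
      nlinarith [hlam.le]
    -- product lower bound
    have hprod : E ≤ ∏ j ∈ Ico i n, g j / (lam + g j) := by
      have hsle : ∑ j ∈ Ico i n, v j ≤ T :=
        Summable.sum_le_tsum _ (fun j _ => hvnn j) hvsum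
      calc E ≤ Real.exp (-(lam * ∑ j ∈ Ico i n, v j)) := by
            apply Real.exp_le_exp.mpr
            apply neg_le_neg
            exact mul_le_mul_of_nonneg_left hsle hlam.le
        _ = ∏ j ∈ Ico i n, Real.exp (-(lam * v j)) := by
            rw [← Real.exp_sum]
            congr 1
            rw [Finset.sum_neg_distrib, Finset.mul_sum]
        _ ≤ ∏ j ∈ Ico i n, g j / (lam + g j) := by
            apply Finset.prod_le_prod (fun j _ => (Real.exp_pos _).le)
            intro j hj
            simp only [Finset.mem_Ico] at hj
            have hj1 : 1 ≤ j := le_trans hi1 hj.1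
            have hgj : 0 < g j := hgpos j hj1
            have hvj : v j = (g j)⁻¹ := if_pos hj1
            rw [hvj]
            have h1x : 0 < 1 + lam * (g j)⁻¹ := by positivity
            have hexp : Real.exp (-(lam * (g j)⁻¹)) ≤ (1 + lam * (g j)⁻¹)⁻¹ := by
              rw [Real.exp_neg]
              apply inv_anti₀ h1x
              linarith [Real.add_one_le_exp (lam * (g j)⁻¹)]
            refine hexp.trans (le_of_eq ?_)
            rw [eq_div_iff (ne_of_gt (by linarith : (0:ℝ) < lam + g j))]
            rw [inv_mul_eq_div, div_eq_iff (ne_of_gt h1x)]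
            field_simp
            ring
    have hfi := hf i
    have hEprod : f i / ((lam + C) * (n : ℝ) ^ q) * E
        ≤ f i / (lam + g n) * ∏ j ∈ Ico i n, g j / (lam + g j) := by
      apply mul_le_mul
      · exact div_le_div_of_nonneg_left hfi hden hbig
      · exact hprod
      · exact hE.le
      · exact div_nonneg hfi hden.le
    calc K * f i * (n : ℝ) ^ (m - q)
        = (n : ℝ) ^ m * (f i / ((lam + C) * (n : ℝ) ^ q) * E) := by
          rw [Real.rpow_sub hn0R]
          rw [hKdef]
          field_simp
      _ ≤ (n : ℝ) ^ m * (f i / (lam + g n) * ∏ j ∈ Ico i n, g j / (lam + g j)) := by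
          apply mul_le_mul_of_nonneg_left hEprod (Real.rpow_nonneg hn0R.le m)
  -- nonnegativity of the terms
  have hterm_nn : ∀ (f : ℕ → ℝ), (∀ n, 0 ≤ f n) → ∀ n : ℕ, ∀ i ∈ Icc 1 n,
      0 ≤ (n : ℝ) ^ m * (f i / (lam + g n) * ∏ j ∈ Ico i n, g j / (lam + g j)) := by
    intro f hf n i hi
    simp only [Finset.mem_Icc] at hi
    have hn1 : 1 ≤ n := le_trans hi.1 hi.2
    have hden : 0 < lam + g n := by linarith [hgpos n hn1]
    apply mul_nonneg (Real.rpow_nonneg (Nat.cast_nonneg n) m)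
    apply mul_nonneg (div_nonneg (hf i) hden.le)
    apply Finset.prod_nonneg
    intro j hj
    simp only [Finset.mem_Ico] at hj
    have hj1 : 1 ≤ j := le_trans hi.1 hj.1
    have := hgpos j hj1
    apply div_nonneg this.le (by linarith)
  -- part 1
  have main : ∀ f : ℕ → ℝ, (∀ n, 0 ≤ f n) →
      (∑' n : ℕ, ENNReal.ofReal ((n : ℝ) ^ m *
          ∑ i ∈ Finset.Icc 1 n, f i / (lam + g n) *
            ∏ j ∈ Finset.Ico i n, g j / (lam + g j)))
        ≥ ENNReal.ofReal (E * C / (lam + C) * C⁻¹) *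
            ∑' i : ℕ, ENNReal.ofReal (f (i + 1)) *
              ∑' k : ℕ, ENNReal.ofReal (((i + 1 + k : ℕ) : ℝ) ^ (m - q)) := by
    intro f hf
    rw [hKeq]
    have step1 : ∀ n : ℕ, ENNReal.ofReal ((n : ℝ) ^ m *
        ∑ i ∈ Finset.Icc 1 n, f i / (lam + g n) *
          ∏ j ∈ Finset.Ico i n, g j / (lam + g j))
        = ∑ i ∈ Finset.Icc 1 n, ENNReal.ofReal ((n : ℝ) ^ m *
            (f i / (lam + g n) * ∏ j ∈ Finset.Ico i n, g j / (lam + g j))) := by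
      intro n
      rw [Finset.mul_sum]
      exact ENNReal.ofReal_sum_of_nonneg (fun i hi => hterm_nn f hf n i hi)
    calc ENNReal.ofReal K *
          ∑' i : ℕ, ENNReal.ofReal (f (i + 1)) *
            ∑' k : ℕ, ENNReal.ofReal (((i + 1 + k : ℕ) : ℝ) ^ (m - q))
        = ∑' i : ℕ, ∑' k : ℕ,
            ENNReal.ofReal (K * f (i + 1) * ((i + 1 + k : ℕ) : ℝ) ^ (m - q)) := by
          rw [← ENNReal.tsum_mul_left]
          apply tsum_congr; intro i
          rw [← mul_assoc, ← ENNReal.tsum_mul_left]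
          apply tsum_congr; intro k
          rw [ENNReal.ofReal_mul (mul_nonneg hK.le (hf _)), ENNReal.ofReal_mul hK.le]
      _ = ∑' n : ℕ, ∑ i ∈ Finset.Icc 1 n,
            ENNReal.ofReal (K * f i * ((n : ℕ) : ℝ) ^ (m - q)) := by
          exact (stmt16_lemA (fun i n => ENNReal.ofReal (K * f i * ((n : ℕ) : ℝ) ^ (m - q)))).symm
      _ ≤ ∑' n : ℕ, ∑ i ∈ Finset.Icc 1 n, ENNReal.ofReal ((n : ℝ) ^ m *
            (f i / (lam + g n) * ∏ j ∈ Finset.Ico i n, g j / (lam + g j))) := by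
          apply ENNReal.tsum_le_tsum
          intro n
          apply Finset.sum_le_sum
          intro i hi
          exact ENNReal.ofReal_le_ofReal (key f hf n i hi)
      _ = ∑' n : ℕ, ENNReal.ofReal ((n : ℝ) ^ m *
            ∑ i ∈ Finset.Icc 1 n, f i / (lam + g n) *
              ∏ j ∈ Finset.Ico i n, g j / (lam + g j)) := by
          exact tsum_congr (fun n => (step1 n).symm)
  -- part 2
  have div : ∀ i : ℕ, 1 ≤ i →
      (∑' k : ℕ, ENNReal.ofReal (((i + k : ℕ) : ℝ) ^ (m - q))) = ⊤ := by
    intro i hi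
    by_contra htop
    have hsum := ENNReal.summable_toReal htop
    have heq : ∀ k : ℕ, (ENNReal.ofReal (((i + k : ℕ) : ℝ) ^ (m - q))).toReal
        = (((i + k : ℕ) : ℝ)) ^ (m - q) := by
      intro k
      exact ENNReal.toReal_ofReal (Real.rpow_nonneg (Nat.cast_nonneg _) _)
    rw [show (fun k => (ENNReal.ofReal (((i + k : ℕ) : ℝ) ^ (m - q))).toReal)
        = (fun k => (((i + k : ℕ) : ℝ)) ^ (m - q)) from funext heq] at hsum
    have hinv : Summable (fun k : ℕ => (((i + k : ℕ) : ℝ))⁻¹) := by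
      apply Summable.of_nonneg_of_le (fun k => by positivity) _ hsum
      intro k
      have hbase : (1 : ℝ) ≤ ((i + k : ℕ) : ℝ) := by
        have : 1 ≤ i + k := by omega
        exact_mod_cast this
      rw [← Real.rpow_neg_one]
      exact Real.rpow_le_rpow_of_exponent_le hbase (by linarith)
    apply Real.not_summable_natCast_inv
    have := (summable_nat_add_iff (f := fun n : ℕ => ((n : ℕ) : ℝ)⁻¹) i).mp ?_
    · exact this
    · apply hinv.congr
      intro k
      congr 2
      omega
  refine ⟨E * C / (lam + C), by positivity, main, div, ?_⟩
  -- part 3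
  intro f hf hf1 hsum
  set term : ℕ → ℝ := fun n => (n : ℝ) ^ m *
      ∑ i ∈ Finset.Icc 1 n, f i / (lam + g n) *
        ∏ j ∈ Finset.Ico i n, g j / (lam + g j) with hterm
  have htnn : ∀ n, 0 ≤ term n := by
    intro n
    apply mul_nonneg (Real.rpow_nonneg (Nat.cast_nonneg n) m)
    apply Finset.sum_nonneg
    intro i hi
    have h := hterm_nn f hf n i hi
    simp only [Finset.mem_Icc] at hi
    have hn1 : 1 ≤ n := le_trans hi.1 hi.2
    have hden : 0 < lam + g n := by linarith [hgpos n hn1]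
    apply mul_nonneg (div_nonneg (hf i) hden.le)
    apply Finset.prod_nonneg
    intro j hj
    simp only [Finset.mem_Ico] at hj
    exact div_nonneg (hgpos j (le_trans hi.1 hj.1)).le
      (by linarith [hgpos j (le_trans hi.1 hj.1)])
  have hfin : (∑' n : ℕ, ENNReal.ofReal (term n)) ≠ ⊤ := by
    rw [← ENNReal.ofReal_tsum_of_nonneg htnn hsum]
    exact ENNReal.ofReal_ne_top
  have hge := main f hf
  have hinner : (∑' k : ℕ, ENNReal.ofReal (((0 + 1 + k : ℕ) : ℝ) ^ (m - q))) = ⊤ := by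
    have h := div 1 le_rfl
    rw [← h]
  have hi0 : ENNReal.ofReal (f (0 + 1)) *
      (∑' k : ℕ, ENNReal.ofReal (((0 + 1 + k : ℕ) : ℝ) ^ (m - q))) = ⊤ := by
    have hne : ENNReal.ofReal (f (0 + 1)) ≠ 0 := by
      simp only [ne_eq, ENNReal.ofReal_eq_zero, not_le]
      exact hf1
    rw [hinner, ENNReal.mul_top hne]
  have hRHS : (∑' i : ℕ, ENNReal.ofReal (f (i + 1)) *
      ∑' k : ℕ, ENNReal.ofReal (((i + 1 + k : ℕ) : ℝ) ^ (m - q))) = ⊤ := by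
    apply eq_top_iff.mpr
    rw [← hi0]
    exact ENNReal.le_tsum 0
  rw [hRHS] at hge
  have hpos : 0 < E * C / (lam + C) * C⁻¹ := by positivity
  rw [ENNReal.mul_top (by simp only [ne_eq, ENNReal.ofReal_eq_zero, not_le]; exact hpos)] at hge
  exact hfin (eq_top_iff.mpr hge)
end

section
/- Let m ≥ 1 real and let θ_n > 0, g_n ≥ 0 satisfy g_n ≤ θ_n for all n (e.g. θ_n = g_n + a_n + d_n with a_n, d_n ≥ 0). For λ > 0, i ≥ 1, define S = ∑_{n=i}^∞ (Γ(n+m)/Γ(n)) · (∏_{j=i}^{n−1} g_j/(λ+θ_j) − ∏_{j=i}^{n} g_j/(λ+θ_j)), assuming the limit lim_{N→∞} (Γ(N+m)/Γ(N))·∏_{j=i}^{N} g_j/(λ+θ_j) = 0 and that all series converge. Then ∑_{n=i}^∞ (Γ(n+m)/Γ(n))·(1/(λ+θ_n))·∏_{j=i}^{n−1} g_j/(λ+θ_j) ≤ S/λ. -/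
open Filter

/-! The series are compared term by term. Since `1/(λ+θ) = (1/λ)·(1 − θ/(λ+θ))` and `g ≤ θ`, the
weight `1/(λ+θ_n)` in front of `∏_{j<n} g_j/(λ+θ_j)` is at most `1/λ` times the drop
`∏_{j<n} − ∏_{j≤n}` of consecutive products; multiplying by `Γ(n+m)/Γ(n) ≥ 0` and summing gives
the claim. -/

lemma one_div_add_mul_le_sub_mul_div {lam θ g P : ℝ} (hlam : 0 < lam) (hg : 0 ≤ g)
    (hgθ : g ≤ θ) (hP : 0 ≤ P) :
    1 / (lam + θ) * P ≤ (P - P * (g / (lam + θ))) / lam := by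
  have hden : 0 < lam + θ := by linarith
  calc 1 / (lam + θ) * P = (P - P * (θ / (lam + θ))) / lam := by field_simp; ring
    _ ≤ (P - P * (g / (lam + θ))) / lam := by gcongr

lemma Gamma_div_Gamma_nonneg {m : ℝ} (hm : 0 ≤ m) (n : ℕ) :
    0 ≤ Real.Gamma ((n : ℝ) + m) / Real.Gamma n :=
  div_nonneg (Real.Gamma_nonneg_of_nonneg (by positivity))
    (Real.Gamma_nonneg_of_nonneg n.cast_nonneg)

theorem stmt_18_general (m lam : ℝ) (hm : 1 ≤ m) (hlam : 0 < lam)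
    (θ g : ℕ → ℝ) (hg0 : ∀ n, 0 ≤ g n) (hgθ : ∀ n, g n ≤ θ n)
    (i : ℕ)
    (hS1 : Summable (fun k : ℕ =>
        Real.Gamma (((i + k : ℕ) : ℝ) + m) / Real.Gamma ((i + k : ℕ) : ℝ) *
          (1 / (lam + θ (i + k))) * ∏ j ∈ Finset.Ico i (i + k), g j / (lam + θ j)))
    (hS2 : Summable (fun k : ℕ =>
        Real.Gamma (((i + k : ℕ) : ℝ) + m) / Real.Gamma ((i + k : ℕ) : ℝ) *
          ((∏ j ∈ Finset.Ico i (i + k), g j / (lam + θ j)) -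
            ∏ j ∈ Finset.Ico i (i + k + 1), g j / (lam + θ j)))) :
    (∑' k : ℕ,
        Real.Gamma (((i + k : ℕ) : ℝ) + m) / Real.Gamma ((i + k : ℕ) : ℝ) *
          (1 / (lam + θ (i + k))) * ∏ j ∈ Finset.Ico i (i + k), g j / (lam + θ j))
      ≤ (∑' k : ℕ,
          Real.Gamma (((i + k : ℕ) : ℝ) + m) / Real.Gamma ((i + k : ℕ) : ℝ) *
            ((∏ j ∈ Finset.Ico i (i + k), g j / (lam + θ j)) -
              ∏ j ∈ Finset.Ico i (i + k + 1), g j / (lam + θ j))) / lam := by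
  rw [← tsum_div_const]
  refine hS1.tsum_le_tsum (fun k => ?_) (hS2.div_const lam)
  have hprod_nonneg : 0 ≤ ∏ j ∈ Finset.Ico i (i + k), g j / (lam + θ j) :=
    Finset.prod_nonneg fun j _ => div_nonneg (hg0 j) (by linarith [hg0 j, hgθ j])
  rw [Finset.prod_Ico_succ_top (Nat.le_add_right i k), mul_assoc, mul_div_assoc]
  exact mul_le_mul_of_nonneg_left
    (one_div_add_mul_le_sub_mul_div hlam (hg0 _) (hgθ _) hprod_nonneg)
    (Gamma_div_Gamma_nonneg (by linarith) _)

/-- Let `m ≥ 1`, `θ_n > 0`, `0 ≤ g_n ≤ θ_n`, `λ > 0`, `i ≥ 1`. Assume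
`Γ(N+m)/Γ(N)·∏_{j=i}^{N} g_j/(λ+θ_j) → 0` and the relevant series converge. Then
`∑_{n=i}^∞ (Γ(n+m)/Γ(n))·(1/(λ+θ_n))·∏_{j=i}^{n−1} g_j/(λ+θ_j) ≤ S/λ`, where
`S = ∑_{n=i}^∞ (Γ(n+m)/Γ(n))·(∏_{j=i}^{n−1} g_j/(λ+θ_j) − ∏_{j=i}^{n} g_j/(λ+θ_j))`. -/
theorem stmt_18 (m lam : ℝ) (hm : 1 ≤ m) (hlam : 0 < lam)
    (θ g : ℕ → ℝ) (hθ : ∀ n, 0 < θ n) (hg0 : ∀ n, 0 ≤ g n) (hgθ : ∀ n, g n ≤ θ n)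
    (i : ℕ) (hi : 1 ≤ i)
    (hlim : Tendsto (fun N : ℕ =>
        Real.Gamma ((N : ℝ) + m) / Real.Gamma N *
          ∏ j ∈ Finset.Icc i N, g j / (lam + θ j)) atTop (nhds 0))
    (hS1 : Summable (fun k : ℕ =>
        Real.Gamma (((i + k : ℕ) : ℝ) + m) / Real.Gamma ((i + k : ℕ) : ℝ) *
          (1 / (lam + θ (i + k))) * ∏ j ∈ Finset.Ico i (i + k), g j / (lam + θ j)))
    (hS2 : Summable (fun k : ℕ =>
        Real.Gamma (((i + k : ℕ) : ℝ) + m) / Real.Gamma ((i + k : ℕ) : ℝ) *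
          ((∏ j ∈ Finset.Ico i (i + k), g j / (lam + θ j)) -
            ∏ j ∈ Finset.Ico i (i + k + 1), g j / (lam + θ j)))) :
    (∑' k : ℕ,
        Real.Gamma (((i + k : ℕ) : ℝ) + m) / Real.Gamma ((i + k : ℕ) : ℝ) *
          (1 / (lam + θ (i + k))) * ∏ j ∈ Finset.Ico i (i + k), g j / (lam + θ j))
      ≤ (∑' k : ℕ,
          Real.Gamma (((i + k : ℕ) : ℝ) + m) / Real.Gamma ((i + k : ℕ) : ℝ) *
            ((∏ j ∈ Finset.Ico i (i + k), g j / (lam + θ j)) -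
              ∏ j ∈ Finset.Ico i (i + k + 1), g j / (lam + θ j))) / lam :=
  stmt_18_general m lam hm hlam θ g hg0 hgθ i hS1 hS2
end
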